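/- arXiv:0812.4834 — 2 statements merged into one kernel-verified Lean document; each statement's English description precedes it below -/
import Mathlib

section
/- Monotonicity in the ferromagnetic couplings (consequence of (3.15), Griffiths' second inequality): Let N ≥ 1, 0 < β < ∞, h ≥ 0, λ ≥ 0, and let K, K' : T_N × T_N → ℝ≥0 be two symmetric coupling matrices with K_{ij} ≤ K'_{ij} for all i, j. Let H(K) be the Hamiltonian given by −H(K) = (1/2)·Σ_{i,j ∈ T_N} K_{ij} σ̂ᶻ_i σ̂ᶻ_j + h·Σ_{i ∈ T_N} σ̂ᶻ_i + λ·Σ_{i ∈ T_N} Σ̂ˣ_i, and similarly H(K'). Then for every site u ∈ T_N, Tr(σ̂ᶻ_u · exp(−βH(K))) / Tr(exp(−βH(K))) ≤ Tr(σ̂ᶻ_u · exp(−βH(K'))) / Tr(exp(−βH(K'))). -/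
open Matrix

noncomputable section

/-- Spin configurations on the discrete torus `(ℤ/Nℤ)^d`. -/
abbrev Cfg (d N : ℕ) := (Fin d → ZMod N) → Bool

/-- Operators: complex matrices indexed by spin configurations. -/
abbrev Op (d N : ℕ) := Matrix (Cfg d N) (Cfg d N) ℂ

/-- The Pauli-z operator at site `i`. -/
def sigmaZ (d N : ℕ) [NeZero N] (i : Fin d → ZMod N) : Op d N :=
  Matrix.diagonal (fun σ => if σ i then 1 else -1)

/-- The Pauli-x operator at site `i`. -/
def sigmaX (d N : ℕ) [NeZero N] (i : Fin d → ZMod N) : Op d N :=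
  Matrix.of fun σ τ => if τ = Function.update σ i (!σ i) then 1 else 0

/-- `Σ̂ˣ_i = (I + σ̂ˣ_i)/2`. -/
def SigX (d N : ℕ) [NeZero N] (i : Fin d → ZMod N) : Op d N :=
  (2 : ℂ)⁻¹ • (1 + sigmaX d N i)

/-- The representative of `a : ZMod N` of absolute value at most `N/2`. -/
def zrep (N : ℕ) [NeZero N] (a : ZMod N) : ℤ :=
  if 2 * a.val ≤ N then (a.val : ℤ) else (a.val : ℤ) - N

/-- Coordinatewise representative of a point of the torus, all coordinates
of absolute value at most `N/2`. -/
def torusRep (d N : ℕ) [NeZero N] (v : Fin d → ZMod N) : Fin d → ℤ :=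
  fun k => zrep N (v k)

/-- Sup-norm of a point of `ℤ^d`. -/
def znorm (d : ℕ) (x : Fin d → ℤ) : ℕ :=
  Finset.univ.sup fun k => (x k).natAbs

/-- Torus couplings induced from an interaction `J` on `ℤ^d`. -/
def JN (d : ℕ) (J : (Fin d → ℤ) → ℝ) (N : ℕ) [NeZero N] (i j : Fin d → ZMod N) : ℝ :=
  J (torusRep d N (i - j))

/-- Torus distance: minimum of `|x|` over representatives `x ∈ ℤ^d` of `i - j`. -/
def torusDist (d N : ℕ) [NeZero N] (i j : Fin d → ZMod N) : ℕ :=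
  sInf { r : ℕ | ∃ x : Fin d → ℤ,
    (∀ k, ((x k : ZMod N) = (i - j) k)) ∧ znorm d x = r }

/-- The transverse field Ising Hamiltonian `H` with
`-H = (ρ/2)·Σ_{i,j} J_{ij} σ̂ᶻ_i σ̂ᶻ_j + h·Σ_i σ̂ᶻ_i + λ·Σ_i Σ̂ˣ_i`. -/
def Ham (d : ℕ) (J : (Fin d → ℤ) → ℝ) (N : ℕ) [NeZero N] (h ρ lam : ℝ) : Op d N :=
  -((((ρ / 2 : ℝ) : ℂ)) • ∑ i, ∑ j, ((JN d J N i j : ℝ) : ℂ) • (sigmaZ d N i * sigmaZ d N j)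
    + ((h : ℝ) : ℂ) • ∑ i, sigmaZ d N i
    + ((lam : ℝ) : ℂ) • ∑ i, SigX d N i)

/-- `exp(−tH)` (matrix exponential). -/
def expH (d N : ℕ) [NeZero N] (H : Op d N) (t : ℝ) : Op d N :=
  NormedSpace.exp ((-(t : ℂ)) • H)

/-- Thermal expectation `⟨A⟩ = Tr(A e^{-βH})/Tr(e^{-βH})` (real part). -/
def texp (d N : ℕ) [NeZero N] (H : Op d N) (β : ℝ) (A : Op d N) : ℝ :=
  ((A * expH d N H β).trace / (expH d N H β).trace).re

/-- Truncated correlation `⟨A;B⟩ = ⟨AB⟩ − ⟨A⟩⟨B⟩`. -/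
def tcorr (d N : ℕ) [NeZero N] (H : Op d N) (β : ℝ) (A B : Op d N) : ℝ :=
  texp d N H β (A * B) - texp d N H β A * texp d N H β B

/-- Hypotheses on the interaction `J`: nonnegative, symmetric, finite range `R`,
irreducible, and `J 0 = 0`. -/
structure Interaction (d : ℕ) (J : (Fin d → ℤ) → ℝ) (R : ℕ) : Prop where
  nonneg : ∀ x, 0 ≤ J x
  symm : ∀ x, J (-x) = J x
  finite_range : ∀ x, R < znorm d x → J x = 0
  irreducible : AddSubgroup.closure { x | 0 < J x } = ⊤
  zero : J 0 = 0

/-- Imaginary-time two-point function: `Tr(A·e^{−gap·H}·B·e^{−(β−gap)H})/Tr(e^{−βH})`. -/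
def tt2 (d N : ℕ) [NeZero N] (H : Op d N) (β : ℝ) (A B : Op d N) (gap : ℝ) : ℝ :=
  ((A * expH d N H gap * B * expH d N H (β - gap)).trace / (expH d N H β).trace).re

/-- The magnetization `M_{β,N}(h,ρ,λ) = ⟨σ̂ᶻ_0⟩_{β,N}`. -/
def Mag (d : ℕ) (J : (Fin d → ℤ) → ℝ) (N : ℕ) [NeZero N] (β h ρ lam : ℝ) : ℝ :=
  texp d N (Ham d J N h ρ lam) β (sigmaZ d N 0)

/-- The Hamiltonian with a general coupling matrix `K` on the torus:
`−H(K) = (1/2)·Σ_{i,j} K_{ij} σ̂ᶻ_i σ̂ᶻ_j + h·Σ_i σ̂ᶻ_i + λ·Σ_i Σ̂ˣ_i`. -/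
def HamK (d N : ℕ) [NeZero N] (K : (Fin d → ZMod N) → (Fin d → ZMod N) → ℝ)
    (h lam : ℝ) : Op d N :=
  -((2 : ℂ)⁻¹ • ∑ i, ∑ j, ((K i j : ℝ) : ℂ) • (sigmaZ d N i * sigmaZ d N j)
    + ((h : ℝ) : ℂ) • ∑ i, sigmaZ d N i
    + ((lam : ℝ) : ℂ) • ∑ i, SigX d N i)

open scoped ComplexOrder Kronecker

/-!
Ginibre's duplicated-variable argument. Put `W = (-βH(K')) ⊗ 1 + 1 ⊗ (-βH(K))` on two copies of
the system. Then `exp W = e^{-βH(K')} ⊗ e^{-βH(K)}`, and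
`Tr ((σᶻ_u ⊗ 1 - 1 ⊗ σᶻ_u) exp W) = Tr (σᶻ_u e^{-βH(K')}) Z(K) - Z(K') Tr (σᶻ_u e^{-βH(K)})`,
where the partition functions `Z` are positive because `H` is Hermitian. So it suffices that this
trace is nonnegative.

After the change of variables `(σ, τ) ↦ (σ, σ ≡ τ)` and a Hadamard transform in `σ`, the operators
`σᶻ_u ⊗ 1 ± 1 ⊗ σᶻ_u` and `σˣ_u ⊗ 1 + 1 ⊗ σˣ_u` become `σˣ_u ⊗ (1 ± σᶻ_u)` and
`(1 - σᶻ_u) ⊗ σˣ_u`, which are entrywise nonnegative. The matrices that are entrywise nonnegative in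
this basis form a closed semiring, stable under nonnegative scalars. It contains `W`, because
`K'ᵢⱼ (σᶻᵢσᶻⱼ ⊗ 1) + Kᵢⱼ (1 ⊗ σᶻᵢσᶻⱼ)` is a nonnegative combination of products of the operators
above as soon as `0 ≤ Kᵢⱼ ≤ K'ᵢⱼ`. Hence it contains `exp W` and `(σᶻ_u ⊗ 1 - 1 ⊗ σᶻ_u) exp W`,
whose trace is therefore nonnegative.
-/

namespace Matrix

def entrywiseNonneg (n R : Type*) [Fintype n] [DecidableEq n] [Semiring R] [PartialOrder R]
    [IsOrderedRing R] : Subsemiring (Matrix n n R) where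
  carrier := {A | ∀ i j, 0 ≤ A i j}
  mul_mem' hA hB i j := Finset.sum_nonneg fun k _ => mul_nonneg (hA i k) (hB k j)
  one_mem' i j := by rw [one_apply]; split_ifs <;> simp
  add_mem' hA hB i j := add_nonneg (hA i j) (hB i j)
  zero_mem' _ _ := le_rfl

section EntrywiseNonneg

variable {m n R : Type*} [Fintype m] [DecidableEq m] [Fintype n] [DecidableEq n] [CommSemiring R]
  [PartialOrder R] [IsOrderedRing R] {A : Matrix n n R}

theorem smul_mem_entrywiseNonneg {c : R} (hc : 0 ≤ c) (hA : A ∈ entrywiseNonneg n R) :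
    c • A ∈ entrywiseNonneg n R :=
  fun i j => mul_nonneg hc (hA i j)

theorem diagonal_mem_entrywiseNonneg {d : n → R} (hd : ∀ i, 0 ≤ d i) :
    diagonal d ∈ entrywiseNonneg n R := fun i j => by
  rw [diagonal_apply]
  split_ifs
  exacts [hd i, le_rfl]

theorem kronecker_mem_entrywiseNonneg {B : Matrix m m R} (hA : A ∈ entrywiseNonneg n R)
    (hB : B ∈ entrywiseNonneg m R) : A ⊗ₖ B ∈ entrywiseNonneg (n × m) R :=
  fun i j => mul_nonneg (hA i.1 j.1) (hB i.2 j.2)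

theorem trace_nonneg_of_mem_entrywiseNonneg (hA : A ∈ entrywiseNonneg n R) : 0 ≤ A.trace :=
  Finset.sum_nonneg fun i _ => hA i i

theorem isClosed_entrywiseNonneg [TopologicalSpace R] [ClosedIciTopology R] :
    IsClosed (entrywiseNonneg n R : Set (Matrix n n R)) := by
  simp only [SetLike.coe, entrywiseNonneg, Set.ofPred_forall]
  exact isClosed_iInter fun i => isClosed_iInter fun j =>
    isClosed_Ici.preimage (continuous_id.matrix_elem i j)

def conjEntrywiseNonneg (P : (Matrix n n R)ˣ) : Subsemiring (Matrix n n R) :=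
  (entrywiseNonneg n R).comap
    (MulSemiringAction.toRingHom (ConjAct (Matrix n n R)ˣ) _ (ConjAct.toConjAct P⁻¹))

variable {P : (Matrix n n R)ˣ} {M : Matrix n n R}

theorem mem_conjEntrywiseNonneg :
    M ∈ conjEntrywiseNonneg P ↔ (P⁻¹ * M * P : Matrix n n R) ∈ entrywiseNonneg n R := by
  simp [conjEntrywiseNonneg, ConjAct.units_smul_def]

theorem mem_conjEntrywiseNonneg_of_mul_eq {N : Matrix n n R} (h : M * P = (P * N : Matrix n n R))
    (hN : N ∈ entrywiseNonneg n R) : M ∈ conjEntrywiseNonneg P := by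
  rwa [mem_conjEntrywiseNonneg, mul_assoc, h, Units.inv_mul_cancel_left]

theorem smul_mem_conjEntrywiseNonneg {c : R} (hc : 0 ≤ c) (hM : M ∈ conjEntrywiseNonneg P) :
    c • M ∈ conjEntrywiseNonneg P := by
  rw [mem_conjEntrywiseNonneg] at hM ⊢
  simpa only [mul_smul_comm, smul_mul_assoc] using smul_mem_entrywiseNonneg hc hM

theorem trace_nonneg_of_mem_conjEntrywiseNonneg (hM : M ∈ conjEntrywiseNonneg P) :
    0 ≤ M.trace := by
  simpa only [trace_units_conj'] using
    trace_nonneg_of_mem_entrywiseNonneg (mem_conjEntrywiseNonneg.mp hM)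

end EntrywiseNonneg

theorem kronecker_neg {l m n p α : Type*} [Mul α] [HasDistribNeg α] (A : Matrix l m α)
    (B : Matrix n p α) : A ⊗ₖ (-B) = -(A ⊗ₖ B) := by
  ext ⟨_, _⟩ ⟨_, _⟩
  exact mul_neg _ _

variable {n : Type*} [Fintype n] [DecidableEq n]

theorem exp_mem_entrywiseNonneg {A : Matrix n n ℂ} (hA : A ∈ entrywiseNonneg n ℂ) :
    NormedSpace.exp A ∈ entrywiseNonneg n ℂ := by
  rw [NormedSpace.exp_eq_tsum ℂ]
  exact tsum_mem isClosed_entrywiseNonneg fun k =>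
    smul_mem_entrywiseNonneg (inv_nonneg.mpr (Nat.cast_nonneg _)) (pow_mem hA k)

theorem exp_mem_conjEntrywiseNonneg {P : (Matrix n n ℂ)ˣ} {M : Matrix n n ℂ}
    (hM : M ∈ conjEntrywiseNonneg P) : NormedSpace.exp M ∈ conjEntrywiseNonneg P := by
  rw [mem_conjEntrywiseNonneg, ← exp_units_conj']
  exact exp_mem_entrywiseNonneg (mem_conjEntrywiseNonneg.mp hM)

theorem IsHermitian.trace_exp_pos [Nonempty n] {A : Matrix n n ℂ} (hA : A.IsHermitian) :
    0 < (NormedSpace.exp A).trace := by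
  set B := NormedSpace.exp ((2 : ℂ)⁻¹ • A)
  have hB : NormedSpace.exp A = Bᴴ * B := by
    rw [← exp_conjTranspose, conjTranspose_smul, hA.eq, star_inv₀, star_ofNat,
      ← exp_add_of_commute _ _ (Commute.refl _), ← add_smul]
    norm_num
  rw [hB]
  exact (posSemidef_conjTranspose_mul_self B).trace_nonneg.lt_of_ne
    (Ne.symm (trace_conjTranspose_mul_self_eq_zero_iff.not.mpr (isUnit_exp _).ne_zero))

def doubled (n : Type*) [Fintype n] [DecidableEq n] :
    Matrix n n ℂ × Matrix n n ℂ →ₗ[ℂ] Matrix (n × n) (n × n) ℂ :=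
  ((kroneckerBilinear (R := ℂ)).flip 1).coprod (kroneckerBilinear (R := ℂ) 1)

theorem doubled_apply (A B : Matrix n n ℂ) : doubled n (A, B) = A ⊗ₖ 1 + 1 ⊗ₖ B := rfl

theorem exp_doubled (A B : Matrix n n ℂ) :
    NormedSpace.exp (doubled n (A, B)) = NormedSpace.exp A ⊗ₖ NormedSpace.exp B := by
  have hcomm : Commute (A ⊗ₖ (1 : Matrix n n ℂ)) ((1 : Matrix n n ℂ) ⊗ₖ B) := by
    simp only [Commute, SemiconjBy, ← mul_kronecker_mul, one_mul, mul_one]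
  let left : Matrix n n ℂ →+* Matrix (n × n) (n × n) ℂ :=
    { toFun := fun X => X ⊗ₖ 1
      map_one' := one_kronecker_one
      map_mul' := fun X Y => by simp only [← mul_kronecker_mul, mul_one]
      map_zero' := zero_kronecker _
      map_add' := fun X Y => add_kronecker X Y _ }
  let right : Matrix n n ℂ →+* Matrix (n × n) (n × n) ℂ :=
    { toFun := fun Y => 1 ⊗ₖ Y
      map_one' := one_kronecker_one
      map_mul' := fun X Y => by simp only [← mul_kronecker_mul, mul_one]
      map_zero' := kronecker_zero _
      map_add' := fun X Y => kronecker_add _ X Y }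
  have hleft : NormedSpace.exp (left A) = left (NormedSpace.exp A) := by
    open scoped Norms.Operator in exact (NormedSpace.map_exp left
      (continuous_matrix fun (p q : n × n) =>
        (continuous_id.matrix_elem p.1 q.1).mul continuous_const) A).symm
  have hright : NormedSpace.exp (right B) = right (NormedSpace.exp B) := by
    open scoped Norms.Operator in exact (NormedSpace.map_exp right
      (continuous_matrix fun (p q : n × n) =>
        continuous_const.mul (continuous_id.matrix_elem p.2 q.2)) B).symm
  rw [doubled_apply, exp_add_of_commute _ _ hcomm]
  change NormedSpace.exp (left A) * NormedSpace.exp (right B) = _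
  rw [hleft, hright]
  simp only [left, right, RingHom.coe_mk, MonoidHom.coe_mk, OneHom.coe_mk, ← mul_kronecker_mul,
    mul_one, one_mul]

theorem trace_doubled_mul_kronecker (A B C D : Matrix n n ℂ) :
    (doubled n (A, B) * (C ⊗ₖ D)).trace = (A * C).trace * D.trace + C.trace * (B * D).trace := by
  rw [doubled_apply, add_mul, ← mul_kronecker_mul, ← mul_kronecker_mul, one_mul, one_mul,
    trace_add, trace_kronecker, trace_kronecker]

end Matrix

namespace TransverseIsing

def spin (b : Bool) : ℂ := if b then 1 else -1

@[simp] theorem spin_mul_self (b : Bool) : spin b * spin b = 1 := by cases b <;> simp [spin]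

theorem spin_beq (a b : Bool) : spin (a == b) = spin a * spin b := by
  cases a <;> cases b <;> simp [spin]

variable {ι : Type*}

def agree (σ τ : ι → Bool) : ι → Bool := fun j => σ j == τ j

@[simp] theorem agree_agree (σ τ : ι → Bool) : agree σ (agree σ τ) = τ := by
  funext j
  simp only [agree]
  cases σ j <;> cases τ j <;> rfl

theorem agree_inj {σ x y : ι → Bool} : agree σ x = agree σ y ↔ x = y :=
  ⟨fun h => by simpa using congrArg (agree σ) h, congrArg _⟩

def agreeEquiv (ι : Type*) : (ι → Bool) × (ι → Bool) ≃ (ι → Bool) × (ι → Bool) where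
  toFun p := (p.1, agree p.1 p.2)
  invFun p := (p.1, agree p.1 p.2)
  left_inv p := by simp
  right_inv p := by simp

@[simp] theorem agreeEquiv_agreeEquiv (p : (ι → Bool) × (ι → Bool)) :
    agreeEquiv ι (agreeEquiv ι p) = p :=
  (agreeEquiv ι).left_inv p

section

variable [Fintype ι]

def pauliZ (u : ι) : Matrix (ι → Bool) (ι → Bool) ℂ := diagonal fun σ => spin (σ u)

theorem isHermitian_pauliZ (u : ι) : (pauliZ u).IsHermitian :=
  isHermitian_diagonal_of_self_adjoint _ (funext fun σ => by cases h : σ u <;> simp [spin, h])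

end

variable [DecidableEq ι]

def flipAt (u : ι) (σ : ι → Bool) : ι → Bool := Function.update σ u (!σ u)

@[simp] theorem flipAt_apply_self (u : ι) (σ : ι → Bool) : flipAt u σ u = !σ u := by
  simp [flipAt]

theorem flipAt_apply_of_ne {u j : ι} (h : j ≠ u) (σ : ι → Bool) : flipAt u σ j = σ j := by
  simp [flipAt, h]

@[simp] theorem flipAt_flipAt (u : ι) (σ : ι → Bool) : flipAt u (flipAt u σ) = σ := by
  simp [flipAt]

theorem flipAt_ne_self (u : ι) (σ : ι → Bool) : flipAt u σ ≠ σ := fun h => by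
  simpa using congrFun h u

theorem eq_flipAt_comm {u : ι} {σ τ : ι → Bool} : σ = flipAt u τ ↔ τ = flipAt u σ := by
  constructor <;> rintro rfl <;> simp

theorem agree_flipAt_left (u : ι) (σ τ : ι → Bool) :
    agree (flipAt u σ) τ = flipAt u (agree σ τ) := by
  funext j
  by_cases h : j = u
  · subst h
    simp only [agree, flipAt_apply_self]
    cases σ j <;> cases τ j <;> rfl
  · simp [agree, flipAt_apply_of_ne h]

theorem agree_flipAt_right (u : ι) (σ τ : ι → Bool) :
    agree σ (flipAt u τ) = flipAt u (agree σ τ) := by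
  funext j
  by_cases h : j = u
  · subst h
    simp only [agree, flipAt_apply_self]
    cases σ j <;> cases τ j <;> rfl
  · simp [agree, flipAt_apply_of_ne h]

variable [Fintype ι]

theorem one_add_smul_pauliZ_mem_entrywiseNonneg (u : ι) {s : ℂ} (hs : ∀ b, 0 ≤ 1 + s * spin b) :
    1 + s • pauliZ u ∈ entrywiseNonneg _ ℂ := by
  rw [pauliZ, ← diagonal_one, ← diagonal_smul, diagonal_add]
  exact diagonal_mem_entrywiseNonneg fun σ => hs (σ u)

def character (ε σ : ι → Bool) : ℂ := ∏ j, if ε j then spin (σ j) else 1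

def hadamardTransform (ι : Type*) [Fintype ι] : Matrix (ι → Bool) (ι → Bool) ℂ :=
  of fun σ ε => character ε σ

def pauliX (u : ι) : Matrix (ι → Bool) (ι → Bool) ℂ :=
  of fun σ τ => if τ = flipAt u σ then 1 else 0

theorem isHermitian_pauliX (u : ι) : (pauliX u).IsHermitian :=
  IsHermitian.ext fun σ τ => by
    simp only [pauliX, of_apply, eq_flipAt_comm (σ := σ)]
    split_ifs <;> simp

theorem pauliX_mem_entrywiseNonneg (u : ι) : pauliX u ∈ entrywiseNonneg _ ℂ := fun σ τ => by
  simp only [pauliX, of_apply]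
  split_ifs <;> norm_num

theorem mul_pauliX_apply {α : Type*} (M : Matrix α (ι → Bool) ℂ) (u : ι) (i : α)
    (σ : ι → Bool) : (M * pauliX u) i σ = M i (flipAt u σ) := by
  simp [mul_apply, pauliX, eq_flipAt_comm (σ := σ)]

theorem pauliX_mul_apply {α : Type*} (M : Matrix (ι → Bool) α ℂ) (u : ι) (σ : ι → Bool)
    (j : α) : (pauliX u * M) σ j = M (flipAt u σ) j := by
  simp [mul_apply, pauliX]

theorem character_flipAt_left (u : ι) (ε σ : ι → Bool) :
    character (flipAt u ε) σ = spin (σ u) * character ε σ := by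
  simp only [character]
  rw [← Finset.mul_prod_erase _ _ (Finset.mem_univ u),
    ← Finset.mul_prod_erase _ _ (Finset.mem_univ u), ← mul_assoc, flipAt_apply_self]
  congr 1
  · cases ε u <;> simp
  · exact Finset.prod_congr rfl fun j hj => by
      rw [flipAt_apply_of_ne (Finset.ne_of_mem_erase hj)]

theorem character_flipAt_right (u : ι) (ε σ : ι → Bool) :
    character ε (flipAt u σ) = -spin (ε u) * character ε σ := by
  simp only [character]
  rw [← Finset.mul_prod_erase _ _ (Finset.mem_univ u),
    ← Finset.mul_prod_erase _ _ (Finset.mem_univ u), ← mul_assoc, flipAt_apply_self]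
  congr 1
  · cases ε u <;> cases σ u <;> simp [spin]
  · exact Finset.prod_congr rfl fun j hj => by
      rw [flipAt_apply_of_ne (Finset.ne_of_mem_erase hj)]

theorem sum_character_mul_character (σ σ' : ι → Bool) :
    ∑ ε, character ε σ * character ε σ' = if σ = σ' then 2 ^ Fintype.card ι else 0 := by
  simp only [character, ← Finset.prod_mul_distrib]
  refine (Fintype.prod_sum fun j (b : Bool) =>
    (if b then spin (σ j) else 1) * (if b then spin (σ' j) else 1)).symm.trans ?_
  simp only [Fintype.sum_bool, ite_true, Bool.false_eq_true, ite_false, mul_one]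
  split_ifs with h
  · subst h
    simp only [spin_mul_self, Finset.prod_const, Finset.card_univ]
    norm_num
  · obtain ⟨j, hj⟩ := Function.ne_iff.mp h
    refine Finset.prod_eq_zero (Finset.mem_univ j) ?_
    cases hσ : σ j <;> cases hσ' : σ' j <;> simp_all [spin]

theorem pauliZ_mul_hadamardTransform (u : ι) :
    pauliZ u * hadamardTransform ι = hadamardTransform ι * pauliX u := by
  ext σ ε
  simp [pauliZ, diagonal_mul, mul_pauliX_apply, hadamardTransform, character_flipAt_left]

theorem pauliX_mul_hadamardTransform (u : ι) :
    pauliX u * hadamardTransform ι = hadamardTransform ι * -pauliZ u := by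
  ext σ ε
  simp [pauliZ, pauliX_mul_apply, hadamardTransform, character_flipAt_right, mul_comm]

theorem hadamardTransform_mul_transpose :
    hadamardTransform ι * (hadamardTransform ι)ᵀ = (2 ^ Fintype.card ι : ℂ) • 1 := by
  ext σ σ'
  simp [mul_apply, hadamardTransform, sum_character_mul_character, one_apply]

theorem doubled_pauliZ_submatrix_agreeEquiv (u : ι) (s : ℂ) :
    (doubled _ (pauliZ u, s • pauliZ u)).submatrix (agreeEquiv ι) (agreeEquiv ι) =
      pauliZ u ⊗ₖ (1 + s • pauliZ u) := by
  simp only [doubled_apply, pauliZ, ← diagonal_one, ← diagonal_smul, diagonal_add,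
    diagonal_kronecker_diagonal, submatrix_diagonal_equiv]
  congr 1
  funext p
  simp only [Function.comp_apply, agreeEquiv, Equiv.coe_fn_mk, agree, spin_beq, Pi.smul_apply,
    smul_eq_mul]
  ring

theorem doubled_pauliX_submatrix_agreeEquiv (u : ι) :
    (doubled _ (pauliX u, pauliX u)).submatrix (agreeEquiv ι) (agreeEquiv ι) =
      (pauliX u + 1) ⊗ₖ pauliX u := by
  ext ⟨σ, x⟩ ⟨σ', x'⟩
  simp only [doubled_apply, Matrix.add_apply, submatrix_apply, agreeEquiv, Equiv.coe_fn_mk,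
    kronecker_apply, pauliX, of_apply, one_apply]
  by_cases h₁ : σ' = flipAt u σ
  · subst h₁
    simp [(flipAt_ne_self u σ).symm, agree_flipAt_left, ← agree_flipAt_right, agree_inj,
      eq_flipAt_comm]
  by_cases h₂ : σ' = σ
  · subst h₂
    simp [h₁, ← agree_flipAt_right, agree_inj]
  simp [h₁, Ne.symm h₂]

def ginibreMatrix (ι : Type*) [Fintype ι] [DecidableEq ι] :
    Matrix ((ι → Bool) × (ι → Bool)) ((ι → Bool) × (ι → Bool)) ℂ :=
  (hadamardTransform ι ⊗ₖ 1).submatrix (agreeEquiv ι) id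

theorem isUnit_ginibreMatrix : IsUnit (ginibreMatrix ι) := by
  set c : ℂ := 2 ^ Fintype.card ι
  have hc : c ≠ 0 := pow_ne_zero _ two_ne_zero
  refine (isUnit_iff_isUnit_det _).mpr (isUnit_det_of_right_inverse (B :=
    (c⁻¹ • (hadamardTransform ι)ᵀ ⊗ₖ (1 : Matrix (ι → Bool) (ι → Bool) ℂ)).submatrix id
      (agreeEquiv ι)) ?_)
  rw [ginibreMatrix, ← submatrix_mul _ _ _ _ _ Function.bijective_id, mul_smul_comm,
    ← mul_kronecker_mul, hadamardTransform_mul_transpose, mul_one, smul_kronecker,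
    one_kronecker_one, smul_smul, inv_mul_cancel₀ hc, one_smul]
  exact submatrix_one_equiv _

def ginibreCone (ι : Type*) [Fintype ι] [DecidableEq ι] :
    Subsemiring (Matrix ((ι → Bool) × (ι → Bool)) ((ι → Bool) × (ι → Bool)) ℂ) :=
  conjEntrywiseNonneg isUnit_ginibreMatrix.unit

theorem mem_ginibreCone_of_mul_eq
    {M N : Matrix ((ι → Bool) × (ι → Bool)) ((ι → Bool) × (ι → Bool)) ℂ}
    (h : M.submatrix (agreeEquiv ι) (agreeEquiv ι) * (hadamardTransform ι ⊗ₖ 1) =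
      (hadamardTransform ι ⊗ₖ 1) * N)
    (hN : N ∈ entrywiseNonneg _ ℂ) : M ∈ ginibreCone ι := by
  refine mem_conjEntrywiseNonneg_of_mul_eq ?_ hN
  rw [IsUnit.unit_spec]
  calc M * ginibreMatrix ι
      = (M.submatrix (agreeEquiv ι) (agreeEquiv ι)).submatrix (agreeEquiv ι) (agreeEquiv ι) *
          (hadamardTransform ι ⊗ₖ 1).submatrix (agreeEquiv ι) id := by
        simp only [submatrix_submatrix, Function.comp_def, agreeEquiv_agreeEquiv]
        rfl
    _ = ((hadamardTransform ι ⊗ₖ 1) * N).submatrix (agreeEquiv ι) id := by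
        rw [submatrix_mul_equiv, h]
    _ = ginibreMatrix ι * N := by
        rw [ginibreMatrix, submatrix_mul _ _ _ _ _ Function.bijective_id, submatrix_id_id]

theorem doubled_pauliZ_smul_mem_ginibreCone (u : ι) {s : ℂ} (hs : ∀ b, 0 ≤ 1 + s * spin b) :
    doubled _ (pauliZ u, s • pauliZ u) ∈ ginibreCone ι := by
  refine mem_ginibreCone_of_mul_eq (N := pauliX u ⊗ₖ (1 + s • pauliZ u)) ?_
    (kronecker_mem_entrywiseNonneg (pauliX_mem_entrywiseNonneg u)
      (one_add_smul_pauliZ_mem_entrywiseNonneg u hs))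
  rw [doubled_pauliZ_submatrix_agreeEquiv, ← mul_kronecker_mul, ← mul_kronecker_mul,
    pauliZ_mul_hadamardTransform, mul_one, one_mul]

theorem doubled_pauliZ_pauliZ_mem_ginibreCone (u : ι) :
    doubled _ (pauliZ u, pauliZ u) ∈ ginibreCone ι := by
  simpa only [one_smul] using
    doubled_pauliZ_smul_mem_ginibreCone u (s := 1) fun b => by cases b <;> norm_num [spin]

theorem doubled_pauliZ_neg_pauliZ_mem_ginibreCone (u : ι) :
    doubled _ (pauliZ u, -pauliZ u) ∈ ginibreCone ι := by
  simpa only [neg_one_smul] using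
    doubled_pauliZ_smul_mem_ginibreCone u (s := -1) fun b => by cases b <;> norm_num [spin]

theorem doubled_pauliX_mem_ginibreCone (u : ι) :
    doubled _ (pauliX u, pauliX u) ∈ ginibreCone ι := by
  refine mem_ginibreCone_of_mul_eq (N := (1 + (-1 : ℂ) • pauliZ u) ⊗ₖ pauliX u) ?_
    (kronecker_mem_entrywiseNonneg (one_add_smul_pauliZ_mem_entrywiseNonneg u fun b => ?_)
      (pauliX_mem_entrywiseNonneg u))
  · rw [doubled_pauliX_submatrix_agreeEquiv, ← mul_kronecker_mul, ← mul_kronecker_mul, mul_one,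
      one_mul, add_mul, pauliX_mul_hadamardTransform, one_mul, neg_one_smul, mul_add, mul_one,
      add_comm]
  · cases b <;> norm_num [spin]

theorem doubled_pauliZ_mul_pauliZ_mem_ginibreCone (i j : ι) {c c' : ℝ} (hc : 0 ≤ c)
    (hcc' : c ≤ c') :
    doubled _ ((c' : ℂ) • (pauliZ i * pauliZ j), (c : ℂ) • (pauliZ i * pauliZ j)) ∈
      ginibreCone ι := by
  have hS := doubled_pauliZ_pauliZ_mem_ginibreCone (ι := ι)
  have hD := doubled_pauliZ_neg_pauliZ_mem_ginibreCone (ι := ι)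
  simp only [doubled_apply, kronecker_smul, smul_kronecker, kronecker_neg] at hS hD ⊢
  set a := pauliZ i ⊗ₖ (1 : Matrix (ι → Bool) (ι → Bool) ℂ)
  set b := (1 : Matrix (ι → Bool) (ι → Bool) ℂ) ⊗ₖ pauliZ i
  set a' := pauliZ j ⊗ₖ (1 : Matrix (ι → Bool) (ι → Bool) ℂ)
  set b' := (1 : Matrix (ι → Bool) (ι → Bool) ℂ) ⊗ₖ pauliZ j
  have haa' : (pauliZ i * pauliZ j) ⊗ₖ (1 : Matrix (ι → Bool) (ι → Bool) ℂ) = a * a' := by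
    rw [← mul_kronecker_mul, mul_one]
  have hbb' : (1 : Matrix (ι → Bool) (ι → Bool) ℂ) ⊗ₖ (pauliZ i * pauliZ j) = b * b' := by
    rw [← mul_kronecker_mul, mul_one]
  -- `(a + b)(a' + b') + (a - b)(a' - b') = 2(aa' + bb')` and
  -- `(a + b)(a' - b') + (a - b)(a' + b') = 2(aa' - bb')`
  have key : (c' : ℂ) • (a * a') + (c : ℂ) • (b * b') =
      (((c' + c) / 4 : ℝ) : ℂ) • ((a + b) * (a' + b') + (a + -b) * (a' + -b')) +
      (((c' - c) / 4 : ℝ) : ℂ) • ((a + b) * (a' + -b') + (a + -b) * (a' + b')) := by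
    simp only [mul_add, add_mul, mul_neg, neg_mul, smul_add, smul_neg]
    push_cast
    module
  rw [haa', hbb', key]
  refine add_mem (smul_mem_conjEntrywiseNonneg ?_ ?_) (smul_mem_conjEntrywiseNonneg ?_ ?_)
  · exact Complex.zero_le_real.mpr (by linarith)
  · exact add_mem (mul_mem (hS i) (hS j)) (mul_mem (hD i) (hD j))
  · exact Complex.zero_le_real.mpr (by linarith)
  · exact add_mem (mul_mem (hS i) (hD j)) (mul_mem (hD i) (hS j))

def isingHam (K : ι → ι → ℝ) (h lam : ℝ) : Matrix (ι → Bool) (ι → Bool) ℂ :=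
  -((2 : ℂ)⁻¹ • ∑ i, ∑ j, ((K i j : ℝ) : ℂ) • (pauliZ i * pauliZ j)
    + ((h : ℝ) : ℂ) • ∑ i, pauliZ i
    + ((lam : ℝ) : ℂ) • ∑ i, (2 : ℂ)⁻¹ • (1 + pauliX i))

theorem isHermitian_isingHam (K : ι → ι → ℝ) (h lam : ℝ) : (isingHam K h lam).IsHermitian := by
  have hreal (r : ℝ) : IsSelfAdjoint (r : ℂ) := Complex.conj_ofReal r
  have hhalf : IsSelfAdjoint (2⁻¹ : ℂ) := by simp [IsSelfAdjoint]
  have hZZ (i j : ι) : (pauliZ i * pauliZ j).IsHermitian :=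
    ((isHermitian_pauliZ i).commute_iff (isHermitian_pauliZ j)).mp <| by
      simp only [pauliZ, Commute, SemiconjBy, diagonal_mul_diagonal, mul_comm]
  refine IsSelfAdjoint.neg (.add (.add ?_ ?_) ?_)
  · exact hhalf.smul <| isSelfAdjoint_sum _ fun i _ => isSelfAdjoint_sum _ fun j _ =>
      (hreal _).smul (hZZ i j).isSelfAdjoint
  · exact (hreal h).smul <| isSelfAdjoint_sum _ fun i _ => (isHermitian_pauliZ i).isSelfAdjoint
  · exact (hreal lam).smul <| isSelfAdjoint_sum _ fun i _ =>
      hhalf.smul ((IsSelfAdjoint.one _).add (isHermitian_pauliX i).isSelfAdjoint)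

theorem trace_exp_isingHam_pos (K : ι → ι → ℝ) (h lam β : ℝ) :
    0 < (NormedSpace.exp (-(β : ℂ) • isingHam K h lam)).trace :=
  ((isHermitian_isingHam K h lam).smul
    (show IsSelfAdjoint (β : ℂ) from Complex.conj_ofReal β).neg).trace_exp_pos

theorem doubled_isingHam_mem_ginibreCone {K K' : ι → ι → ℝ} {h lam β : ℝ}
    (hK : ∀ i j, 0 ≤ K i j) (hKK' : ∀ i j, K i j ≤ K' i j) (hh : 0 ≤ h) (hlam : 0 ≤ lam)
    (hβ : 0 ≤ β) :
    doubled _ (-(β : ℂ) • isingHam K' h lam, -(β : ℂ) • isingHam K h lam) ∈ ginibreCone ι := by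
  have hdecomp : (-(β : ℂ) • isingHam K' h lam, -(β : ℂ) • isingHam K h lam) =
      (β : ℂ) • ((2 : ℂ)⁻¹ • ∑ i, ∑ j, (((K' i j : ℝ) : ℂ) • (pauliZ i * pauliZ j),
          ((K i j : ℝ) : ℂ) • (pauliZ i * pauliZ j))
        + ((h : ℝ) : ℂ) • ∑ i, (pauliZ i, pauliZ i)
        + ((lam : ℝ) : ℂ) • ∑ i, (2 : ℂ)⁻¹ • ((1, 1) + (pauliX i, pauliX i))) := by
    ext1 <;>
    simp only [isingHam, Complex.coe_smul, smul_add, neg_add_rev, smul_neg, neg_smul, neg_neg,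
      Prod.mk_add_mk, Prod.smul_mk, Prod.fst_add, Prod.smul_fst, Prod.fst_sum, Prod.snd_add,
      Prod.smul_snd, Prod.snd_sum] <;>
    abel
  have two_inv_nonneg : (0 : ℂ) ≤ 2⁻¹ := inv_nonneg.mpr zero_le_two
  rw [hdecomp]
  simp only [map_add, map_smul, map_sum]
  refine smul_mem_conjEntrywiseNonneg (Complex.zero_le_real.mpr hβ) (add_mem (add_mem ?_ ?_) ?_)
  · exact smul_mem_conjEntrywiseNonneg two_inv_nonneg (sum_mem fun i _ => sum_mem fun j _ =>
      doubled_pauliZ_mul_pauliZ_mem_ginibreCone i j (hK i j) (hKK' i j))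
  · exact smul_mem_conjEntrywiseNonneg (Complex.zero_le_real.mpr hh)
      (sum_mem fun i _ => doubled_pauliZ_pauliZ_mem_ginibreCone i)
  · refine smul_mem_conjEntrywiseNonneg (Complex.zero_le_real.mpr hlam) (sum_mem fun i _ =>
      smul_mem_conjEntrywiseNonneg two_inv_nonneg (add_mem ?_ (doubled_pauliX_mem_ginibreCone i)))
    rw [doubled_apply, one_kronecker_one]
    exact add_mem (one_mem _) (one_mem _)

end TransverseIsing

open TransverseIsing in
theorem magnetization_monotone_in_couplings_general
    (d : ℕ) (N : ℕ) [NeZero N]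
    (β : ℝ) (hβ : 0 < β) (h lam : ℝ) (hh : 0 ≤ h) (hlam : 0 ≤ lam)
    (K K' : (Fin d → ZMod N) → (Fin d → ZMod N) → ℝ)
    (hKpos : ∀ i j, 0 ≤ K i j)
    (hKK' : ∀ i j, K i j ≤ K' i j)
    (u : Fin d → ZMod N) :
    texp d N (HamK d N K h lam) β (sigmaZ d N u) ≤
      texp d N (HamK d N K' h lam) β (sigmaZ d N u) := by
  have hginibre := trace_nonneg_of_mem_conjEntrywiseNonneg <|
    mul_mem (doubled_pauliZ_neg_pauliZ_mem_ginibreCone u)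
      (exp_mem_conjEntrywiseNonneg (doubled_isingHam_mem_ginibreCone hKpos hKK' hh hlam hβ.le))
  rw [exp_doubled, trace_doubled_mul_kronecker, neg_mul, trace_neg] at hginibre
  -- `texp`, `HamK` and `sigmaZ` unfold to the objects above on the sites `Fin d → ZMod N`
  show ((pauliZ u * NormedSpace.exp (-(β : ℂ) • isingHam K h lam)).trace / _).re ≤
    ((pauliZ u * NormedSpace.exp (-(β : ℂ) • isingHam K' h lam)).trace / _).re
  refine Complex.re_le_re <| (div_le_div_iff₀ (trace_exp_isingHam_pos K h lam β)
    (trace_exp_isingHam_pos K' h lam β)).mpr ?_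
  rw [← sub_nonneg]
  convert hginibre using 1
  ring

/-- **Monotonicity in the ferromagnetic couplings (Griffiths' second inequality,
consequence of (3.15)).** If `0 ≤ K ≤ K'` (entrywise, both symmetric), then
`⟨σ̂ᶻ_u⟩_{H(K)} ≤ ⟨σ̂ᶻ_u⟩_{H(K')}`. -/
theorem magnetization_monotone_in_couplings
    (d : ℕ) (hd : 1 ≤ d) (N : ℕ) [NeZero N] (hN : 1 ≤ N)
    (β : ℝ) (hβ : 0 < β) (h lam : ℝ) (hh : 0 ≤ h) (hlam : 0 ≤ lam)
    (K K' : (Fin d → ZMod N) → (Fin d → ZMod N) → ℝ)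
    (hKsymm : ∀ i j, K i j = K j i) (hK'symm : ∀ i j, K' i j = K' j i)
    (hKpos : ∀ i j, 0 ≤ K i j) (hK'pos : ∀ i j, 0 ≤ K' i j)
    (hKK' : ∀ i j, K i j ≤ K' i j)
    (u : Fin d → ZMod N) :
    texp d N (HamK d N K h lam) β (sigmaZ d N u) ≤
      texp d N (HamK d N K' h lam) β (sigmaZ d N u) :=
  magnetization_monotone_in_couplings_general d N β hβ h lam hh hlam K K' hKpos hKK' u

end
end

section
/- First-passage percolation bound (inequality (5.5)): Fix d ≥ 1. There exist ε₀ > 0, c₁ > 0 and c₂ < ∞, depending only on d, with the following property. Let m ≥ 3, let V = (ℤ/mℤ) × ℤ^d be the lattice in which two vertices are adjacent iff they differ by ±1 (mod m) in the first coordinate or by a unit vector in the ℤ^d coordinate, let δ > 0, and let (X(r))_{r ∈ V} be i.i.d. random variables with P(X(r) = 0) = ε and P(X(r) = δ) = 1 − ε, where ε ≤ ε₀. For vertices p, q ∈ V let d(p,q) denote the minimal number of vertices contained in a nearest-neighbor path from p to q (including both endpoints), and let T(p,q) = min over nearest-neighbor paths γ from p to q of Σ_{r ∈ γ} X(r). Then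 for all p, q ∈ V: P( T(p,q) < (δ/2)·d(p,q) ) ≤ c₂ · exp(−c₁·d(p,q)). -/
/-!
Off a null event every site time is `0` or `δ`. If `T(p,q) < (δ/2) d(p,q)`, a path witnessing this
can be shortened to a self-avoiding one with `L ≥ d(p,q)` vertices, more than half of which have
time `0`. For a fixed self-avoiding path, independence bounds the probability of this by
`C(L, k) ε^k ≤ (2√ε)^L` with `k = ⌊L/2⌋ + 1`, and at most `(2d+2)^(L-1)` paths with `L` vertices
start at `p`. Once `√ε ≤ 1/(8(2d+2))` the term for length `L` is at most `4^(-L)`, so the union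
bound over `L ≥ d(p,q)` is at most `2^(-d(p,q))`: `c₁ = log 2` and `c₂ = 1`.
-/

open MeasureTheory ProbabilityTheory

noncomputable section

/-- The vertex set `V = (ℤ/mℤ) × ℤ^d`. -/
abbrev Vtx (d m : ℕ) := ZMod m × (Fin d → ℤ)

/-- Adjacency on `V = (ℤ/mℤ) × ℤ^d`: two vertices are adjacent iff they differ
by `±1 (mod m)` in the first coordinate or by a unit vector in the `ℤ^d`
coordinate. -/
def VAdj (d m : ℕ) (p q : Vtx d m) : Prop :=
  (p.2 = q.2 ∧ (q.1 = p.1 + 1 ∨ q.1 = p.1 - 1)) ∨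
  (p.1 = q.1 ∧ ∃ k : Fin d,
    q.2 = Function.update p.2 k (p.2 k + 1) ∨
    q.2 = Function.update p.2 k (p.2 k - 1))

/-- A nearest-neighbor path from `p` to `q`: a nonempty finite sequence of
vertices starting at `p`, ending at `q`, with consecutive vertices adjacent. -/
def IsPath (d m : ℕ) (p q : Vtx d m) (γ : List (Vtx d m)) : Prop :=
  γ ≠ [] ∧ γ.head? = some p ∧ γ.getLast? = some q ∧ γ.Chain' (VAdj d m)

/-- `d(p,q)`: the minimal number of vertices contained in a nearest-neighbor
path from `p` to `q` (including both endpoints). -/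
def vtxDist (d m : ℕ) (p q : Vtx d m) : ℕ :=
  sInf { n : ℕ | ∃ γ, IsPath d m p q γ ∧ γ.length = n }

/-- The minimal passage time `T(p,q)` for site passage times `X`: the minimum
over nearest-neighbor paths `γ` from `p` to `q` of `Σ_{r ∈ γ} X(r)`. -/
def passageTime (d m : ℕ) (X : Vtx d m → ℝ) (p q : Vtx d m) : ℝ :=
  sInf { c : ℝ | ∃ γ, IsPath d m p q γ ∧ c = (γ.map X).sum }

open ENNReal Finset

theorem exists_nodup_sublist_of_isChain {α : Type*} {r : α → α → Prop} :
    ∀ {l : List α}, l.IsChain r → ∃ l' : List α, l'.Sublist l ∧ l'.Nodup ∧ l'.IsChain r ∧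
      l'.head? = l.head? ∧ l'.getLast? = l.getLast?
  | [], _ => ⟨[], .slnil, List.nodup_nil, .nil, rfl, rfl⟩
  | x :: t, hl => by
    rw [List.isChain_cons] at hl
    obtain ⟨t', hsub, hnd, hch, hhead, hlast⟩ := exists_nodup_sublist_of_isChain hl.2
    by_cases hx : x ∈ t'
    · -- a loop through `x`: keep only the part of `t'` from `x` on
      obtain ⟨u, v, rfl⟩ := List.append_of_mem hx
      have hv : (x :: v).Sublist (u ++ x :: v) := List.sublist_append_right u _
      refine ⟨x :: v, (hv.trans hsub).trans (List.sublist_cons_self x t),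
        hnd.sublist hv, hch.suffix (List.suffix_append u _), rfl, ?_⟩
      obtain ⟨y, t, rfl⟩ := List.exists_cons_of_ne_nil (l := t) (by rintro rfl; simp at hsub)
      rw [List.getLast?_cons_cons, ← hlast, List.getLast?_append_cons]
    · refine ⟨x :: t', hsub.cons_cons x, List.nodup_cons.2 ⟨hx, hnd⟩,
        List.isChain_cons.2 ⟨hhead ▸ hl.1, hch⟩, rfl, ?_⟩
      rw [List.getLast?_cons, List.getLast?_cons, hlast]

theorem sum_eq_mul_card_filter_ne_zero {ι R : Type*} [NonAssocSemiring R] [DecidableEq R]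
    {f : ι → R} {δ : R} {s : Finset ι} (hf : ∀ r ∈ s, f r = 0 ∨ f r = δ) : ∑ r ∈ s, f r = δ * #{r ∈ s | f r ≠ 0} := by
  calc ∑ r ∈ s, f r = ∑ r ∈ s, if f r ≠ 0 then δ else 0 :=
        sum_congr rfl fun r hr => by rcases hf r hr with h | h <;> simp [h]
    _ = δ * #{r ∈ s | f r ≠ 0} := by rw [← sum_filter, sum_const, nsmul_eq_mul']

section Walks

variable {α : Type*} [DecidableEq α]

/-- Walks of `n` steps (hence `n + 1` vertices) from `p`, each step going into `nbrs` of the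
current vertex. -/
def walksFrom (nbrs : α → Finset α) : ℕ → α → Finset (List α)
  | 0, p => {[p]}
  | n + 1, p => (nbrs p).biUnion fun q => (walksFrom nbrs n q).image (p :: ·)

theorem length_of_mem_walksFrom {nbrs : α → Finset α} {n : ℕ} {p : α} {γ : List α}
    (h : γ ∈ walksFrom nbrs n p) : γ.length = n + 1 := by
  induction n generalizing p γ with
  | zero => simp_all [walksFrom]
  | succ n ih =>
    simp only [walksFrom, mem_biUnion, mem_image] at h
    obtain ⟨q, -, γ', hγ', rfl⟩ := h
    simp [ih hγ']

theorem card_walksFrom_le {nbrs : α → Finset α} {K : ℕ} (hK : ∀ p, #(nbrs p) ≤ K)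
    (n : ℕ) (p : α) : #(walksFrom nbrs n p) ≤ K ^ n := by
  induction n generalizing p with
  | zero => simp [walksFrom]
  | succ n ih =>
    calc #(walksFrom nbrs (n + 1) p)
        ≤ ∑ q ∈ nbrs p, #((walksFrom nbrs n q).image (p :: ·)) := card_biUnion_le
      _ ≤ ∑ _q ∈ nbrs p, K ^ n := sum_le_sum fun q _ => card_image_le.trans (ih q)
      _ ≤ K ^ (n + 1) := by
        rw [sum_const, smul_eq_mul, pow_succ']
        exact Nat.mul_le_mul_right _ (hK p)

theorem mem_walksFrom_of_isChain {nbrs : α → Finset α} {r : α → α → Prop}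
    (hr : ∀ p q, r p q → q ∈ nbrs p) {γ : List α} {p : α} (hp : γ.head? = some p)
    (hγ : γ.IsChain r) : γ ∈ walksFrom nbrs (γ.length - 1) p := by
  induction γ generalizing p with
  | nil => simp at hp
  | cons a t ih =>
    obtain rfl : a = p := by simpa using hp
    cases t with
    | nil => simp [walksFrom]
    | cons b t =>
      rw [List.isChain_cons_cons] at hγ
      simp only [List.length_cons, Nat.add_sub_cancel, walksFrom, mem_biUnion, mem_image]
      exact ⟨b, hr _ _ hγ.1, b :: t, by simpa using ih rfl hγ.2, rfl⟩

end Walks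

section Independent

variable {Ω ι : Type*} {mΩ : MeasurableSpace Ω} {μ : Measure Ω}

theorem ae_eq_or_eq_of_one_le_measure_add [IsProbabilityMeasure μ] {Y : Ω → ℝ} {a b : ℝ}
    (hY : Measurable Y) (hab : a ≠ b) (h : 1 ≤ μ {ω | Y ω = a} + μ {ω | Y ω = b}) :
    ∀ᵐ ω ∂μ, Y ω = a ∨ Y ω = b := by
  have hmeas : ∀ c, MeasurableSet {ω | Y ω = c} := fun c => hY (measurableSet_singleton c)
  have hdisj : Disjoint {ω | Y ω = a} {ω | Y ω = b} :=
    Set.disjoint_left.2 fun ω ha hb => hab (ha.symm.trans hb)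
  have hunion : μ {ω | Y ω = a ∨ Y ω = b} = μ {ω | Y ω = a} + μ {ω | Y ω = b} := by
    rw [Set.ofPred_or, measure_union hdisj (hmeas b)]
  have hmeas_or : MeasurableSet {ω | Y ω = a ∨ Y ω = b} := (hmeas a).union (hmeas b)
  rw [ae_iff_measure_eq hmeas_or.nullMeasurableSet, measure_univ]
  exact le_antisymm prob_le_one (hunion ▸ h)

variable {X : ι → Ω → ℝ} {ε : ℝ}

theorem ae_forall_eq_zero_or_eq [Countable ι] [IsProbabilityMeasure μ] {δ : ℝ} (hδ : δ ≠ 0)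
    (hmeas : ∀ r, Measurable (X r)) (hzero : ∀ r, μ {ω | X r ω = 0} = ENNReal.ofReal ε)
    (hone : ∀ r, μ {ω | X r ω = δ} = ENNReal.ofReal (1 - ε)) :
    ∀ᵐ ω ∂μ, ∀ r, X r ω = 0 ∨ X r ω = δ := by
  refine ae_all_iff.2 fun r => ae_eq_or_eq_of_one_le_measure_add (hmeas r) hδ.symm ?_
  rw [hzero, hone, ← ofReal_one]
  exact (ofReal_le_ofReal (by linarith)).trans ofReal_add_le

theorem measure_forall_mem_eq_zero (hX : iIndepFun X μ)
    (hzero : ∀ r, μ {ω | X r ω = 0} = ENNReal.ofReal ε) (S : Finset ι) :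
    μ {ω | ∀ r ∈ S, X r ω = 0} = ENNReal.ofReal ε ^ #S := by
  have h := hX.measure_inter_preimage_eq_mul S (sets := fun _ => {0})
    fun _ _ => measurableSet_singleton 0
  simp only [Set.preimage, Set.mem_singleton_iff] at h
  rw [← prod_const, ← prod_congr rfl fun r _ => hzero r, ← h]
  congr 1
  ext ω
  simp

theorem measure_le_card_filter_eq_zero_le (hX : iIndepFun X μ)
    (hzero : ∀ r, μ {ω | X r ω = 0} = ENNReal.ofReal ε) (s : Finset ι) (k : ℕ) :
    μ {ω | k ≤ #{r ∈ s | X r ω = 0}} ≤ (#s).choose k * ENNReal.ofReal ε ^ k := by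
  have hsub : {ω | k ≤ #{r ∈ s | X r ω = 0}} ⊆
      ⋃ S ∈ s.powersetCard k, {ω | ∀ r ∈ S, X r ω = 0} := by
    intro ω hω
    obtain ⟨S, hS, hcard⟩ := exists_subset_card_eq hω
    simp only [Set.mem_iUnion, mem_powersetCard, Set.mem_ofPred_eq]
    exact ⟨S, ⟨hS.trans (filter_subset _ _), hcard⟩, fun r hr => (mem_filter.1 (hS hr)).2⟩
  calc μ {ω | k ≤ #{r ∈ s | X r ω = 0}}
      ≤ ∑ S ∈ s.powersetCard k, μ {ω | ∀ r ∈ S, X r ω = 0} :=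
        (measure_mono hsub).trans (measure_biUnion_finset_le _ _)
    _ = ∑ _S ∈ s.powersetCard k, ENNReal.ofReal ε ^ k :=
        sum_congr rfl fun S hS => by
          rw [measure_forall_mem_eq_zero hX hzero, (mem_powersetCard.1 hS).2]
    _ = (#s).choose k * ENNReal.ofReal ε ^ k := by
        rw [sum_const, card_powersetCard, nsmul_eq_mul]

theorem measure_card_lt_two_mul_card_filter_eq_zero_le (hX : iIndepFun X μ)
    (hzero : ∀ r, μ {ω | X r ω = 0} = ENNReal.ofReal ε) (hε : ε ≤ 1) (s : Finset ι) :
    μ {ω | #s < 2 * #{r ∈ s | X r ω = 0}} ≤ (2 * ENNReal.ofReal √ε) ^ #s := by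
  set k := #s / 2 + 1
  have hsqrt : ENNReal.ofReal √ε ≤ 1 :=
    ofReal_le_one.2 (Real.sqrt_le_one.2 hε)
  have hε_sq : ENNReal.ofReal ε ≤ ENNReal.ofReal √ε ^ 2 := by
    rw [← ofReal_pow (Real.sqrt_nonneg ε)]
    exact ofReal_le_ofReal (Real.sq_sqrt' ▸ le_max_left ε 0)
  calc μ {ω | #s < 2 * #{r ∈ s | X r ω = 0}}
      ≤ μ {ω | k ≤ #{r ∈ s | X r ω = 0}} := measure_mono fun ω hω => by
        simp only [Set.mem_ofPred_eq] at hω ⊢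
        omega
    _ ≤ (#s).choose k * ENNReal.ofReal ε ^ k := measure_le_card_filter_eq_zero_le hX hzero s k
    _ ≤ 2 ^ #s * ENNReal.ofReal √ε ^ #s := by
        refine mul_le_mul' (by exact_mod_cast Nat.choose_le_two_pow _ _) ?_
        calc ENNReal.ofReal ε ^ k ≤ (ENNReal.ofReal √ε ^ 2) ^ k := by gcongr
          _ ≤ ENNReal.ofReal √ε ^ #s := by
            rw [← pow_mul]
            exact pow_le_pow_right_of_le_one' hsqrt (by omega)
    _ = (2 * ENNReal.ofReal √ε) ^ #s := (mul_pow _ _ _).symm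

end Independent

theorem pow_mul_pow_succ_le_two_inv_pow_mul {K D n : ℕ} {θ : ℝ≥0∞} (hK : 1 ≤ K)
    (hKθ : K * θ ≤ 4⁻¹) (hD : D ≤ n + 1) :
    (K : ℝ≥0∞) ^ n * θ ^ (n + 1) ≤ 2⁻¹ ^ D * 2⁻¹ ^ (n + 1) := by
  have h4 : (4⁻¹ : ℝ≥0∞) = 2⁻¹ * 2⁻¹ := by
    rw [← ENNReal.mul_inv (by simp) (by simp)]
    norm_num
  calc (K : ℝ≥0∞) ^ n * θ ^ (n + 1) ≤ K ^ (n + 1) * θ ^ (n + 1) := by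
        gcongr
        · exact_mod_cast hK
        · omega
    _ = (K * θ) ^ (n + 1) := (mul_pow _ _ _).symm
    _ ≤ (2⁻¹ * 2⁻¹) ^ (n + 1) := by rw [← h4]; gcongr
    _ ≤ 2⁻¹ ^ D * 2⁻¹ ^ (n + 1) := by
        rw [mul_pow]
        exact mul_le_mul_left (pow_le_pow_right_of_le_one' (ENNReal.inv_le_one.2 one_le_two) hD) _

theorem natCast_mul_two_mul_ofReal_sqrt_le {K : ℕ} {ε : ℝ} (hK : 1 ≤ K)
    (hε : ε ≤ ((8 * K : ℕ) : ℝ)⁻¹ ^ 2) : (K : ℝ≥0∞) * (2 * ENNReal.ofReal √ε) ≤ 4⁻¹ := by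
  have hK' : (1 : ℝ) ≤ K := by exact_mod_cast hK
  have hsqrt : √ε ≤ ((8 * K : ℕ) : ℝ)⁻¹ :=
    (Real.sqrt_le_sqrt hε).trans_eq (Real.sqrt_sq (by positivity))
  have hreal : (K : ℝ) * (2 * √ε) ≤ 4⁻¹ := by
    calc (K : ℝ) * (2 * √ε) ≤ K * (2 * ((8 * K : ℕ) : ℝ)⁻¹) := by gcongr
      _ = 4⁻¹ := by push_cast; field_simp; norm_num
  calc (K : ℝ≥0∞) * (2 * ENNReal.ofReal √ε) = ENNReal.ofReal ((K : ℝ) * (2 * √ε)) := by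
        rw [ofReal_mul (by positivity), ofReal_mul zero_le_two, ofReal_natCast, ofReal_ofNat]
    _ ≤ ENNReal.ofReal 4⁻¹ := ofReal_le_ofReal hreal
    _ = 4⁻¹ := by rw [ofReal_inv_of_pos four_pos, ofReal_ofNat]

section Lattice

variable {d m : ℕ}

def vtxNbrs (d m : ℕ) (p : Vtx d m) : Finset (Vtx d m) :=
  {(p.1 + 1, p.2), (p.1 - 1, p.2)} ∪ univ.biUnion fun k =>
    {(p.1, Function.update p.2 k (p.2 k + 1)), (p.1, Function.update p.2 k (p.2 k - 1))}

theorem card_vtxNbrs_le (p : Vtx d m) : #(vtxNbrs d m p) ≤ 2 * d + 2 := by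
  calc #(vtxNbrs d m p) ≤ 2 + ∑ _k : Fin d, 2 :=
        (card_union_le _ _).trans <|
          add_le_add card_le_two (card_biUnion_le.trans (sum_le_sum fun _ _ => card_le_two))
    _ = 2 * d + 2 := by simp [mul_comm, add_comm]

theorem mem_vtxNbrs_of_vAdj {p q : Vtx d m} (h : VAdj d m p q) : q ∈ vtxNbrs d m p := by
  rcases h with ⟨h2, h1 | h1⟩ | ⟨h1, k, h2 | h2⟩ <;> simp [vtxNbrs, Prod.ext_iff, h1, h2]
  exacts [⟨k, .inl rfl⟩, ⟨k, .inr rfl⟩]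

theorem exists_nodup_path_of_passageTime_lt {x : Vtx d m → ℝ} {δ : ℝ} (hδ : 0 < δ)
    (hx : ∀ r, x r = 0 ∨ x r = δ) {p q : Vtx d m}
    (h : passageTime d m x p q < δ / 2 * vtxDist d m p q) :
    ∃ γ, IsPath d m p q γ ∧ γ.Nodup ∧ vtxDist d m p q ≤ γ.length ∧
      #γ.toFinset < 2 * #{r ∈ γ.toFinset | x r = 0} := by
  have hne : {c : ℝ | ∃ γ, IsPath d m p q γ ∧ c = (γ.map x).sum}.Nonempty := by
    by_contra hempty
    have hD : vtxDist d m p q = 0 := Nat.sInf_eq_zero.2 <| Or.inr <|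
      Set.eq_empty_of_forall_notMem fun n ⟨γ, hγ, _⟩ => hempty ⟨_, γ, hγ, rfl⟩
    simp [passageTime, Set.not_nonempty_iff_eq_empty.1 hempty, hD] at h
  obtain ⟨_, ⟨γ, hγ, rfl⟩, hlt⟩ := exists_lt_of_csInf_lt hne h
  obtain ⟨γ', hsub, hnd, hch, hhead, hlast⟩ := exists_nodup_sublist_of_isChain hγ.2.2.2
  have hγ' : IsPath d m p q γ' :=
    ⟨by rintro rfl; simp [hγ.2.1] at hhead, hhead ▸ hγ.2.1, hlast ▸ hγ.2.2.1, hch⟩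
  have hD : vtxDist d m p q ≤ γ'.length := Nat.sInf_le ⟨γ', hγ', rfl⟩
  have hsum : (γ'.map x).sum ≤ (γ.map x).sum :=
    (hsub.map x).sum_le_sum fun _ hr => by
      obtain ⟨r, -, rfl⟩ := List.mem_map.1 hr
      rcases hx r with h | h <;> rw [h]; exact hδ.le
  have hcount : (γ'.map x).sum = δ * #{r ∈ γ'.toFinset | x r ≠ 0} := by
    rw [← List.sum_toFinset _ hnd]
    exact sum_eq_mul_card_filter_ne_zero fun r _ => hx r
  have hsplit : #{r ∈ γ'.toFinset | x r = 0} + #{r ∈ γ'.toFinset | x r ≠ 0} = γ'.length := by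
    rw [card_filter_add_card_filter_not, List.toFinset_card_of_nodup hnd]
  have hfew : 2 * #{r ∈ γ'.toFinset | x r ≠ 0} < γ'.length := by
    have hD' : (vtxDist d m p q : ℝ) ≤ γ'.length := by exact_mod_cast hD
    have : δ * (2 * #{r ∈ γ'.toFinset | x r ≠ 0} : ℕ) < δ * γ'.length := by
      push_cast; nlinarith
    exact_mod_cast lt_of_mul_lt_mul_left this hδ.le
  refine ⟨γ', hγ', hnd, hD, ?_⟩
  rw [List.toFinset_card_of_nodup hnd]
  omega

theorem measure_passageTime_lt_le_two_inv_pow [NeZero m] {Ω : Type*} [MeasurableSpace Ω]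
    {μ : Measure Ω} [IsProbabilityMeasure μ] {X : Vtx d m → Ω → ℝ} {δ ε : ℝ} (hδ : 0 < δ)
    (hε : ((2 * d + 2 : ℕ) : ℝ≥0∞) * (2 * ENNReal.ofReal √ε) ≤ 4⁻¹) (hε1 : ε ≤ 1)
    (hmeas : ∀ r, Measurable (X r)) (hX : iIndepFun X μ)
    (hzero : ∀ r, μ {ω | X r ω = 0} = ENNReal.ofReal ε)
    (hone : ∀ r, μ {ω | X r ω = δ} = ENNReal.ofReal (1 - ε)) (p q : Vtx d m) :
    μ {ω | passageTime d m (fun r => X r ω) p q < δ / 2 * vtxDist d m p q} ≤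
      2⁻¹ ^ vtxDist d m p q := by
  set D := vtxDist d m p q
  let W n := {γ ∈ walksFrom (vtxNbrs d m) n p | D ≤ γ.length ∧ γ.Nodup}
  let A n := ⋃ γ ∈ W n, {ω | #γ.toFinset < 2 * #{r ∈ γ.toFinset | X r ω = 0}}
  have hcover : {ω | passageTime d m (fun r => X r ω) p q < δ / 2 * D} ≤ᵐ[μ] ⋃ n, A n := by
    filter_upwards [ae_forall_eq_zero_or_eq hδ.ne' hmeas hzero hone] with ω hω hE
    obtain ⟨γ, hγ, hnd, hDγ, hmaj⟩ := exists_nodup_path_of_passageTime_lt hδ hω hE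
    have hwalk := mem_walksFrom_of_isChain (fun _ _ => mem_vtxNbrs_of_vAdj) hγ.2.1 hγ.2.2.2
    exact Set.mem_iUnion.2 ⟨γ.length - 1, Set.mem_biUnion (mem_filter.2 ⟨hwalk, hDγ, hnd⟩) hmaj⟩
  have hA : ∀ n, μ (A n) ≤ 2⁻¹ ^ D * 2⁻¹ ^ (n + 1) := by
    intro n
    by_cases hD : D ≤ n + 1
    · calc μ (A n) ≤ ∑ γ ∈ W n, μ {ω | #γ.toFinset < 2 * #{r ∈ γ.toFinset | X r ω = 0}} :=
            measure_biUnion_finset_le _ _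
        _ ≤ ∑ _γ ∈ W n, (2 * ENNReal.ofReal √ε) ^ (n + 1) := sum_le_sum fun γ hγ => by
            obtain ⟨hwalk, -, hnd⟩ := mem_filter.1 hγ
            have hcard : #γ.toFinset = n + 1 := by
              rw [List.toFinset_card_of_nodup hnd, length_of_mem_walksFrom hwalk]
            exact hcard ▸ measure_card_lt_two_mul_card_filter_eq_zero_le hX hzero hε1 _
        _ ≤ (2 * d + 2 : ℕ) ^ n * (2 * ENNReal.ofReal √ε) ^ (n + 1) := by
            rw [sum_const, nsmul_eq_mul]
            gcongr
            exact_mod_cast (card_filter_le _ _).trans (card_walksFrom_le card_vtxNbrs_le n p)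
        _ ≤ 2⁻¹ ^ D * 2⁻¹ ^ (n + 1) :=
            pow_mul_pow_succ_le_two_inv_pow_mul (by omega) hε hD
    · have hW : W n = ∅ := filter_eq_empty_iff.2 fun γ hγ hDγ =>
        hD (hDγ.1.trans (length_of_mem_walksFrom hγ).le)
      simp [A, hW]
  calc μ {ω | passageTime d m (fun r => X r ω) p q < δ / 2 * D}
      ≤ μ (⋃ n, A n) := measure_mono_ae hcover
    _ ≤ ∑' n, μ (A n) := measure_iUnion_le _
    _ ≤ ∑' n : ℕ, 2⁻¹ ^ D * 2⁻¹ ^ (n + 1) := ENNReal.tsum_le_tsum hA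
    _ = 2⁻¹ ^ D := by
        rw [ENNReal.tsum_mul_left, ENNReal.tsum_geometric_add_one, one_sub_inv_two, inv_inv,
          ENNReal.inv_mul_cancel two_ne_zero ofNat_ne_top, mul_one]

end Lattice

theorem fpp_passage_time_bound_general (d : ℕ) :
    ∃ ε₀ c₁ c₂ : ℝ, 0 < ε₀ ∧ 0 < c₁ ∧
      ∀ (m : ℕ), 3 ≤ m → ∀ (δ : ℝ), 0 < δ →
        ∀ (Ω : Type) (mΩ : MeasurableSpace Ω) (μ : Measure Ω),
          IsProbabilityMeasure μ →
          ∀ (X : Vtx d m → Ω → ℝ) (ε : ℝ), 0 ≤ ε → ε ≤ ε₀ →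
            (∀ r, Measurable (X r)) →
            iIndepFun X μ →
            (∀ r, μ { ω | X r ω = 0 } = ENNReal.ofReal ε) →
            (∀ r, μ { ω | X r ω = δ } = ENNReal.ofReal (1 - ε)) →
            ∀ p q : Vtx d m,
              μ { ω | passageTime d m (fun r => X r ω) p q <
                    (δ / 2) * (vtxDist d m p q : ℝ) } ≤
                ENNReal.ofReal (c₂ * Real.exp (-c₁ * (vtxDist d m p q : ℝ))) := by
  refine ⟨((8 * (2 * d + 2) : ℕ) : ℝ)⁻¹ ^ 2, Real.log 2, 1, by positivity,
    Real.log_pos one_lt_two, ?_⟩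
  intro m hm δ hδ Ω _ μ _ X ε _ hε hmeas hX hzero hone p q
  have : NeZero m := ⟨by omega⟩
  have hε1 : ε ≤ 1 := hε.trans <| pow_le_one₀ (by positivity) <|
    inv_le_one_of_one_le₀ (by norm_cast; omega)
  calc _ ≤ 2⁻¹ ^ vtxDist d m p q :=
        measure_passageTime_lt_le_two_inv_pow hδ
          (natCast_mul_two_mul_ofReal_sqrt_le (by omega) hε) hε1 hmeas hX hzero hone p q
    _ = ENNReal.ofReal (1 * Real.exp (-Real.log 2 * vtxDist d m p q)) := by
        rw [one_mul, neg_mul, Real.exp_neg, mul_comm, Real.exp_nat_mul, Real.exp_log two_pos,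
          ← inv_pow, ofReal_pow (by norm_num), ofReal_inv_of_pos two_pos, ofReal_ofNat]

/-- **First-passage percolation bound (5.5).** For i.i.d. Bernoulli site passage
times taking value `0` with probability `ε ≤ ε₀` and `δ` with probability
`1 − ε` on `(ℤ/mℤ) × ℤ^d`, the probability that `T(p,q) < (δ/2)·d(p,q)` is at
most `c₂·exp(−c₁·d(p,q))`, with `ε₀, c₁, c₂` depending only on `d`. -/
theorem fpp_passage_time_bound (d : ℕ) (hd : 1 ≤ d) :
    ∃ ε₀ c₁ c₂ : ℝ, 0 < ε₀ ∧ 0 < c₁ ∧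
      ∀ (m : ℕ), 3 ≤ m → ∀ (δ : ℝ), 0 < δ →
        ∀ (Ω : Type) (mΩ : MeasurableSpace Ω) (μ : Measure Ω),
          IsProbabilityMeasure μ →
          ∀ (X : Vtx d m → Ω → ℝ) (ε : ℝ), 0 ≤ ε → ε ≤ ε₀ →
            (∀ r, Measurable (X r)) →
            iIndepFun X μ →
            (∀ r, μ { ω | X r ω = 0 } = ENNReal.ofReal ε) →
            (∀ r, μ { ω | X r ω = δ } = ENNReal.ofReal (1 - ε)) →
            ∀ p q : Vtx d m,
              μ { ω | passageTime d m (fun r => X r ω) p q <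
                    (δ / 2) * (vtxDist d m p q : ℝ) } ≤
                ENNReal.ofReal (c₂ * Real.exp (-c₁ * (vtxDist d m p q : ℝ))) :=
  fpp_passage_time_bound_general d

end
end
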